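/- arXiv:2106.00303 — 4 statements merged into one kernel-verified Lean document; each statement's English description precedes it below -/
import Mathlib

section
/- Let n ≥ 1 be an integer and let μ be a Radon measure on ℝ^{n+1} which is n-AD-regular at all scales: there are 0 < c₁ ≤ c₂ with c₁ r^n ≤ μ(B(x,r)) ≤ c₂ r^n for all x ∈ supp μ and all r > 0. Then there is a constant M, depending only on n, c₁ and c₂, such that 𝔼(μ|_B) ≤ M r(B)^{3/4} θ_μ(2B)² μ(2B) for every ball B ⊂ ℝ^{n+1}. -/
open MeasureTheory Metric Set ENNReal

noncomputable section

/-- The (topological) support of a measure on a metric space: the set of points all of whose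
balls have positive measure. -/
def measSupport {X : Type*} [PseudoMetricSpace X] [MeasurableSpace X]
    (μ : Measure X) : Set X :=
  {x | ∀ r : ℝ, 0 < r → 0 < μ (ball x r)}

/-- The `n`-dimensional density `θ_μ(x,r) = μ(B(x,r))/rⁿ`. -/
def ballDensity (n : ℕ) (μ : Measure (EuclideanSpace ℝ (Fin (n + 1))))
    (x : EuclideanSpace ℝ (Fin (n + 1))) (r : ℝ) : ℝ≥0∞ :=
  μ (ball x r) / ENNReal.ofReal (r ^ n)

/-- The Wolff-type energy with parameter `a`:
`𝔼^{(a)}(μ) = ∫∫₀^∞ ( μ(B(x,r))/r^{n−a/2} )² (dr/r) dμ(x)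
            = ∫∫₀^∞ r^a θ_μ(x,r)² (dr/r) dμ(x)`.
For `a = 3/4` this is the energy `𝔼(μ)` of the paper. -/
def wolffEnergy (n : ℕ) (a : ℝ) (μ : Measure (EuclideanSpace ℝ (Fin (n + 1)))) : ℝ≥0∞ :=
  ∫⁻ x, (∫⁻ r in Ioi (0 : ℝ),
      (μ (ball x r) / ENNReal.ofReal (r ^ ((n : ℝ) - a / 2))) ^ 2 * (ENNReal.ofReal r)⁻¹) ∂μ

/-!
Fix `B = B(z, ρ)` and a point `x ∈ B ∩ supp μ`, and split the inner integral of the energy at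
`r = ρ`. For `r ≤ ρ`, upper regularity bounds the integrand by `c₂² r^(a-1)`, integrable at `0`
since `a > 0`. For `r > ρ`, the mass of `μ|_B` is at most `μ(B(x, 2ρ)) ≤ c₂ (2ρ)ⁿ` and
`r^(a-2n-1)` is integrable at `∞` since `a < 2n`. So the inner integral is `O(ρ^a)`, and
`𝔼(μ|_B) = O(ρ^a μ(B))`. If `μ(B) > 0`, then `B` meets `supp μ` and lower regularity gives
`θ_μ(2B) ≥ c₁ / 2ⁿ`, which supplies the factor `θ_μ(2B)²`.
-/

lemma measSupport_eq_support {X : Type*} [PseudoMetricSpace X] [MeasurableSpace X]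
    (μ : Measure X) : measSupport μ = μ.support := by
  ext x
  exact nhds_basis_ball.mem_measureSupport.symm

lemma setLIntegral_Ioc_rpow_sub_one {a ρ : ℝ} (ha : 0 < a) (hρ : 0 ≤ ρ) :
    ∫⁻ r in Ioc 0 ρ, ENNReal.ofReal (r ^ (a - 1)) = ENNReal.ofReal (ρ ^ a / a) := by
  have hint : IntegrableOn (fun r : ℝ ↦ r ^ (a - 1)) (Ioc 0 ρ) :=
    (intervalIntegrable_iff_integrableOn_Ioc_of_le hρ).1
      (intervalIntegral.intervalIntegrable_rpow' (by linarith))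
  rw [← ofReal_integral_eq_lintegral_ofReal hint
      ((ae_restrict_iff' measurableSet_Ioc).2 (.of_forall fun r hr ↦ Real.rpow_nonneg hr.1.le _)),
    ← intervalIntegral.integral_of_le hρ, integral_rpow (.inl (by linarith)), sub_add_cancel,
    Real.zero_rpow ha.ne', sub_zero]

lemma setLIntegral_Ioi_rpow {s ρ : ℝ} (hs : s < -1) (hρ : 0 < ρ) :
    ∫⁻ r in Ioi ρ, ENNReal.ofReal (r ^ s) = ENNReal.ofReal (-ρ ^ (s + 1) / (s + 1)) := by
  rw [← ofReal_integral_eq_lintegral_ofReal (integrableOn_Ioi_rpow_of_lt hs hρ)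
      ((ae_restrict_iff' measurableSet_Ioi).2
        (.of_forall fun r hr ↦ Real.rpow_nonneg (hρ.trans hr).le _)),
    integral_Ioi_rpow_of_lt hs hρ]

def wolffKernel (n : ℕ) (a : ℝ) (m : ℝ≥0∞) (r : ℝ) : ℝ≥0∞ :=
  (m / ENNReal.ofReal (r ^ ((n : ℝ) - a / 2))) ^ 2 * (ENNReal.ofReal r)⁻¹

section WolffKernel

variable {n : ℕ} {a : ℝ}

lemma wolffEnergy_eq_lintegral_wolffKernel (μ : Measure (EuclideanSpace ℝ (Fin (n + 1)))) :
    wolffEnergy n a μ = ∫⁻ x, (∫⁻ r in Ioi (0 : ℝ), wolffKernel n a (μ (ball x r)) r) ∂μ :=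
  rfl

@[gcongr]
lemma wolffKernel_le_wolffKernel {m m' : ℝ≥0∞} (h : m ≤ m') (r : ℝ) :
    wolffKernel n a m r ≤ wolffKernel n a m' r := by
  unfold wolffKernel
  gcongr

lemma wolffKernel_ofReal {m r : ℝ} (hm : 0 ≤ m) (hr : 0 < r) :
    wolffKernel n a (ENNReal.ofReal m) r = ENNReal.ofReal (m ^ 2 * r ^ (a - 2 * n - 1)) := by
  have hpos : 0 < r ^ ((n : ℝ) - a / 2) := Real.rpow_pos_of_pos hr _
  rw [wolffKernel, ← ofReal_div_of_pos hpos, ← ofReal_pow (div_nonneg hm hpos.le),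
    ← ofReal_inv_of_pos hr, ← ofReal_mul (by positivity),
    show a - 2 * n - 1 = -(((n : ℝ) - a / 2) + ((n : ℝ) - a / 2) + 1) by ring,
    Real.rpow_neg hr.le, Real.rpow_add hr, Real.rpow_add hr, Real.rpow_one]
  congr 1
  field_simp

lemma setLIntegral_wolffKernel_Ioc_le {f : ℝ → ℝ≥0∞} {C ρ : ℝ} (ha : 0 < a) (hC : 0 ≤ C)
    (hρ : 0 ≤ ρ) (hf : ∀ r ∈ Ioc 0 ρ, f r ≤ ENNReal.ofReal (C * r ^ n)) :
    ∫⁻ r in Ioc 0 ρ, wolffKernel n a (f r) r ≤ ENNReal.ofReal (C ^ 2 * (ρ ^ a / a)) := by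
  have hpointwise : ∀ r ∈ Ioc 0 ρ,
      wolffKernel n a (f r) r ≤ ENNReal.ofReal (C ^ 2) * ENNReal.ofReal (r ^ (a - 1)) := by
    intro r hr
    refine (wolffKernel_le_wolffKernel (hf r hr) r).trans_eq ?_
    rw [wolffKernel_ofReal (by have := hr.1; positivity) hr.1, ← ofReal_mul (sq_nonneg C),
      show a - 1 = (a - 2 * n - 1) + (2 * n : ℕ) by push_cast; ring,
      Real.rpow_add hr.1, Real.rpow_natCast]
    ring_nf
  calc ∫⁻ r in Ioc 0 ρ, wolffKernel n a (f r) r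
      ≤ ∫⁻ r in Ioc 0 ρ, ENNReal.ofReal (C ^ 2) * ENNReal.ofReal (r ^ (a - 1)) :=
        setLIntegral_mono' measurableSet_Ioc hpointwise
    _ = ENNReal.ofReal (C ^ 2 * (ρ ^ a / a)) := by
        rw [lintegral_const_mul _ (by fun_prop), setLIntegral_Ioc_rpow_sub_one ha hρ,
          ← ofReal_mul (sq_nonneg C)]

lemma setLIntegral_wolffKernel_Ioi_le {f : ℝ → ℝ≥0∞} {m ρ : ℝ} (ha : a < 2 * n) (hm : 0 ≤ m)
    (hρ : 0 < ρ) (hf : ∀ r ∈ Ioi ρ, f r ≤ ENNReal.ofReal m) :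
    ∫⁻ r in Ioi ρ, wolffKernel n a (f r) r ≤
      ENNReal.ofReal (m ^ 2 * (ρ ^ (a - 2 * n) / (2 * n - a))) := by
  have hpointwise : ∀ r ∈ Ioi ρ,
      wolffKernel n a (f r) r ≤ ENNReal.ofReal (m ^ 2) * ENNReal.ofReal (r ^ (a - 2 * n - 1)) :=
    fun r hr ↦ (wolffKernel_le_wolffKernel (hf r hr) r).trans_eq <| by
      rw [wolffKernel_ofReal hm (hρ.trans hr), ofReal_mul (sq_nonneg m)]
  calc ∫⁻ r in Ioi ρ, wolffKernel n a (f r) r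
      ≤ ∫⁻ r in Ioi ρ, ENNReal.ofReal (m ^ 2) * ENNReal.ofReal (r ^ (a - 2 * n - 1)) :=
        setLIntegral_mono' measurableSet_Ioi hpointwise
    _ = ENNReal.ofReal (m ^ 2 * (ρ ^ (a - 2 * n) / (2 * n - a))) := by
        rw [lintegral_const_mul _ (by fun_prop), setLIntegral_Ioi_rpow (by linarith) hρ,
          ← ofReal_mul (sq_nonneg m), sub_add_cancel, neg_div, ← div_neg, neg_sub]

end WolffKernel

section Regularity

variable {X : Type*} [PseudoMetricSpace X] [MeasurableSpace X] {n : ℕ} {a : ℝ}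

lemma lintegral_wolffKernel_restrict_ball_le {μ : Measure X} {c₂ ρ : ℝ} {x z : X}
    (ha₀ : 0 < a) (ha : a < 2 * n) (hc₂ : 0 ≤ c₂) (hρ : 0 < ρ) (hxz : x ∈ ball z ρ)
    (hx : ∀ r, 0 < r → μ (ball x r) ≤ ENNReal.ofReal (c₂ * r ^ n)) :
    ∫⁻ r in Ioi (0 : ℝ), wolffKernel n a (μ.restrict (ball z ρ) (ball x r)) r ≤
      ENNReal.ofReal (c₂ ^ 2 * (1 / a + 4 ^ n / (2 * n - a)) * ρ ^ a) := by
  have hsmall := setLIntegral_wolffKernel_Ioc_le (f := fun r ↦ μ.restrict (ball z ρ) (ball x r))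
    ha₀ hc₂ hρ.le fun r hr ↦ (Measure.restrict_apply_le _ _).trans (hx r hr.1)
  have hlarge := setLIntegral_wolffKernel_Ioi_le (f := fun r ↦ μ.restrict (ball z ρ) (ball x r))
    (m := c₂ * (2 * ρ) ^ n) ha (by positivity) hρ fun r _ ↦
    calc μ.restrict (ball z ρ) (ball x r) ≤ μ (ball z ρ) :=
          (measure_mono (subset_univ _)).trans_eq (Measure.restrict_apply_univ _)
      _ ≤ μ (ball x (2 * ρ)) := measure_mono <| ball_subset_ball' <| by
          rw [dist_comm]; linarith [mem_ball.1 hxz]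
      _ ≤ ENNReal.ofReal (c₂ * (2 * ρ) ^ n) := hx _ (by positivity)
  rw [← Ioc_union_Ioi_eq_Ioi hρ.le, lintegral_union measurableSet_Ioi (Ioc_disjoint_Ioi le_rfl)]
  refine (add_le_add hsmall hlarge).trans_eq ?_
  rw [← ofReal_add (by positivity) (by positivity)]
  congr 1
  rw [Real.rpow_sub hρ, show (2 * n : ℝ) = (2 * n : ℕ) by push_cast; ring, Real.rpow_natCast,
    show (4 : ℝ) ^ n = (2 ^ n) ^ 2 by rw [← pow_mul, mul_comm, pow_mul]; norm_num]
  field_simp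
  ring

end Regularity

section ADRegular

variable {n : ℕ} {a c₁ c₂ ρ : ℝ} {μ : Measure (EuclideanSpace ℝ (Fin (n + 1)))}

lemma wolffEnergy_restrict_ball_le (ha₀ : 0 < a) (ha : a < 2 * n) (hc₂ : 0 ≤ c₂)
    (hupper : ∀ x ∈ measSupport μ, ∀ r, 0 < r → μ (ball x r) ≤ ENNReal.ofReal (c₂ * r ^ n))
    (hρ : 0 < ρ) (z : EuclideanSpace ℝ (Fin (n + 1))) :
    wolffEnergy n a (μ.restrict (ball z ρ)) ≤
      ENNReal.ofReal (c₂ ^ 2 * (1 / a + 4 ^ n / (2 * n - a)) * ρ ^ a) * μ (ball z ρ) := by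
  have hae : ∀ᵐ x ∂μ.restrict (ball z ρ), x ∈ ball z ρ ∧ x ∈ measSupport μ :=
    (ae_restrict_mem measurableSet_ball).and <| ae_restrict_of_ae <| by
      rw [measSupport_eq_support]
      exact Measure.support_mem_ae
  rw [wolffEnergy_eq_lintegral_wolffKernel, ← setLIntegral_const]
  exact lintegral_mono_ae <| hae.mono fun x hx ↦
    lintegral_wolffKernel_restrict_ball_le ha₀ ha hc₂ hρ hx.1 (hupper x hx.2)

lemma ofReal_div_two_pow_le_ballDensity
    (hlower : ∀ x ∈ measSupport μ, ∀ r, 0 < r → ENNReal.ofReal (c₁ * r ^ n) ≤ μ (ball x r))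
    (hρ : 0 < ρ) {z : EuclideanSpace ℝ (Fin (n + 1))} (hμ : μ (ball z ρ) ≠ 0) :
    ENNReal.ofReal (c₁ / 2 ^ n) ≤ ballDensity n μ z (2 * ρ) := by
  obtain ⟨x, hxz, hxs⟩ := Measure.nonempty_inter_support_of_pos (pos_iff_ne_zero.2 hμ)
  rw [← measSupport_eq_support] at hxs
  calc ENNReal.ofReal (c₁ / 2 ^ n)
      = ENNReal.ofReal (c₁ * ρ ^ n) / ENNReal.ofReal ((2 * ρ) ^ n) := by
        rw [← ofReal_div_of_pos (by positivity), mul_pow]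
        congr 1
        field_simp
    _ ≤ μ (ball z (2 * ρ)) / ENNReal.ofReal ((2 * ρ) ^ n) := by
        gcongr
        refine (hlower x hxs ρ hρ).trans (measure_mono (ball_subset_ball' ?_))
        linarith [mem_ball.1 hxz]
    _ = ballDensity n μ z (2 * ρ) := rfl

theorem wolffEnergy_restrict_ball_le_ballDensity (ha₀ : 0 < a) (ha : a < 2 * n) (hc₁ : 0 < c₁)
    (hc₂ : 0 ≤ c₂)
    (hlower : ∀ x ∈ measSupport μ, ∀ r, 0 < r → ENNReal.ofReal (c₁ * r ^ n) ≤ μ (ball x r))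
    (hupper : ∀ x ∈ measSupport μ, ∀ r, 0 < r → μ (ball x r) ≤ ENNReal.ofReal (c₂ * r ^ n))
    (hρ : 0 < ρ) (z : EuclideanSpace ℝ (Fin (n + 1))) :
    wolffEnergy n a (μ.restrict (ball z ρ)) ≤
      ENNReal.ofReal (c₂ ^ 2 * (1 / a + 4 ^ n / (2 * n - a)) * 4 ^ n / c₁ ^ 2 * ρ ^ a) *
        ballDensity n μ z (2 * ρ) ^ 2 * μ (ball z (2 * ρ)) := by
  set K := c₂ ^ 2 * (1 / a + 4 ^ n / (2 * n - a))
  refine (wolffEnergy_restrict_ball_le ha₀ ha hc₂ hupper hρ z).trans ?_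
  rcases eq_or_ne (μ (ball z ρ)) 0 with hμ | hμ
  · simp [hμ]
  calc ENNReal.ofReal (K * ρ ^ a) * μ (ball z ρ)
      = ENNReal.ofReal (K * 4 ^ n / c₁ ^ 2 * ρ ^ a) * ENNReal.ofReal (c₁ / 2 ^ n) ^ 2 *
          μ (ball z ρ) := by
        rw [← ofReal_pow (by positivity), ← ofReal_mul (by positivity)]
        congr 2
        rw [show (4 : ℝ) ^ n = (2 ^ n) ^ 2 by rw [← pow_mul, mul_comm, pow_mul]; norm_num]
        field_simp
    _ ≤ ENNReal.ofReal (K * 4 ^ n / c₁ ^ 2 * ρ ^ a) * ballDensity n μ z (2 * ρ) ^ 2 *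
          μ (ball z (2 * ρ)) := by
        gcongr
        · exact ofReal_div_two_pow_le_ballDensity hlower hρ hμ
        · linarith

end ADRegular

/-- **Remark 1.3 of Dąbrowski–Tolsa:** if `μ` is `n`-AD-regular at all scales, then it
satisfies the subcritical Wolff energy condition
`𝔼(μ|_B) ≤ M r(B)^{3/4} θ_μ(2B)² μ(2B)` for every ball `B`, with `M` depending only on
`n` and the AD-regularity constants. -/
theorem statement_7 (n : ℕ) (hn : 1 ≤ n) (c₁ c₂ : ℝ) (hc₁ : 0 < c₁) (hc₁₂ : c₁ ≤ c₂) :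
    ∃ M : ℝ, 0 < M ∧
      ∀ (μ : Measure (EuclideanSpace ℝ (Fin (n + 1)))),
        IsLocallyFiniteMeasure μ →
        (∀ x ∈ measSupport μ, ∀ r : ℝ, 0 < r →
            ENNReal.ofReal (c₁ * r ^ n) ≤ μ (ball x r) ∧
            μ (ball x r) ≤ ENNReal.ofReal (c₂ * r ^ n)) →
        ∀ (z : EuclideanSpace ℝ (Fin (n + 1))) (ρ : ℝ), 0 < ρ →
          wolffEnergy n (3 / 4) (μ.restrict (ball z ρ)) ≤
            ENNReal.ofReal (M * ρ ^ ((3 : ℝ) / 4)) *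
              ballDensity n μ z (2 * ρ) ^ 2 * μ (ball z (2 * ρ)) := by
  have hc₂ : 0 < c₂ := hc₁.trans_le hc₁₂
  have ha : (3 / 4 : ℝ) < 2 * n := by
    have : (1 : ℝ) ≤ n := by exact_mod_cast hn
    linarith
  refine ⟨c₂ ^ 2 * (1 / (3 / 4) + 4 ^ n / (2 * n - 3 / 4)) * 4 ^ n / c₁ ^ 2, by positivity,
    fun μ _ hreg z ρ hρ ↦ ?_⟩
  exact wolffEnergy_restrict_ball_le_ballDensity (by norm_num) ha hc₁ hc₂.le
    (fun x hx r hr ↦ (hreg x hx r hr).1) (fun x hx r hr ↦ (hreg x hx r hr).2) hρ z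

end
end

section
/- Let A ≥ 4 and C_d ≥ 1 + 2√A be real numbers, let m ≥ 1 be an integer, let p₀ ≥ 0 and let t₁, …, t_m be nonnegative reals. For 1 ≤ j ≤ m define p_j = Σ_{i=1}^{j} A^{i−j} t_i + A^{−j} p₀. If C_d · t_j ≤ p_j for every 1 ≤ j ≤ m, then t_m ≤ A^{−m/2} p₀ and p_m ≤ 2 A^{−m/2} p₀. -/
/-!
Write `P j = ∑_{i ≤ j} A^{i-j} t i + A^{-j} p₀`, so that `P 0 = p₀` and
`P (j+1) = A⁻¹ P j + t (j+1)`. The non-doubling condition `C_d t (j+1) ≤ P (j+1)` forces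
`2 √A · t (j+1) ≤ A⁻¹ P j`, so the new term `t (j+1)` is negligible and
`P (j+1) ≤ (5/4) A⁻¹ P j ≤ A^{-1/2} P j` as `√A ≥ 2`. Hence `P m ≤ A^{-m/2} p₀`, and
`t m ≤ C_d t m ≤ P m`.
-/

open Finset

lemma two_le_sqrt {A : ℝ} (hA : 4 ≤ A) : 2 ≤ √A := by
  rw [show (4 : ℝ) = 2 ^ 2 by norm_num] at hA
  exact Real.le_sqrt_of_sq_le hA

lemma inv_mul_add_le_inv_sqrt_mul {A Cd P τ : ℝ} (hA : 4 ≤ A) (hCd : 1 + 2 * √A ≤ Cd)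
    (hP : 0 ≤ P) (hτ : 0 ≤ τ) (h : Cd * τ ≤ A⁻¹ * P + τ) :
    A⁻¹ * P + τ ≤ (√A)⁻¹ * P := by
  have hs := two_le_sqrt hA
  have hQ : 0 ≤ A⁻¹ * P := by positivity
  have hsQ : (√A)⁻¹ * P = √A * (A⁻¹ * P) := by
    have hA0 : 0 < A := by linarith
    field_simp
    rw [Real.sq_sqrt hA0.le, mul_comm]
  have hτ_small : 4 * τ ≤ A⁻¹ * P := by nlinarith
  rw [hsQ]
  nlinarith

lemma inv_sqrt_pow_eq_rpow {A : ℝ} (hA : 0 ≤ A) (m : ℕ) : (√A)⁻¹ ^ m = A ^ (-(m : ℝ) / 2) := by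
  rw [Real.sqrt_eq_rpow, ← Real.rpow_neg hA, ← Real.rpow_natCast, ← Real.rpow_mul hA]
  ring_nf

namespace ChainPoisson

/-- The Poisson coefficient `p_j = 𝒫(Q_j)` of the `j`-th cube of the chain. -/
noncomputable def coeff (A p₀ : ℝ) (t : ℕ → ℝ) (j : ℕ) : ℝ :=
  (∑ i ∈ Icc 1 j, A ^ ((i : ℤ) - (j : ℤ)) * t i) + A ^ (-(j : ℤ)) * p₀

variable {A p₀ : ℝ} {t : ℕ → ℝ}

@[simp]
lemma coeff_zero : coeff A p₀ t 0 = p₀ := by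
  simp [coeff]

lemma coeff_succ (hA : A ≠ 0) (j : ℕ) :
    coeff A p₀ t (j + 1) = A⁻¹ * coeff A p₀ t j + t (j + 1) := by
  have shift : ∀ k : ℤ, A ^ (k - ((j + 1 : ℕ) : ℤ)) = A⁻¹ * A ^ (k - j) := fun k => by
    rw [← zpow_neg_one, ← zpow_add₀ hA]
    congr 1
    push_cast
    ring
  have hp₀ := shift 0
  simp only [zero_sub] at hp₀
  have htop : ((j + 1 : ℕ) : ℤ) - j = 1 := by push_cast; ring
  simp only [coeff, sum_Icc_succ_top (Nat.le_add_left 1 j), shift, hp₀, htop, zpow_one,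
    mul_add, mul_sum, mul_assoc, inv_mul_cancel_left₀ hA]
  ring

lemma coeff_nonneg (hA : 0 ≤ A) (hp₀ : 0 ≤ p₀) {j : ℕ} (ht : ∀ i, 1 ≤ i → i ≤ j → 0 ≤ t i) :
    0 ≤ coeff A p₀ t j := by
  refine add_nonneg (sum_nonneg fun i hi => ?_) (by positivity)
  rw [mem_Icc] at hi
  exact mul_nonneg (by positivity) (ht i hi.1 hi.2)

lemma coeff_le_inv_sqrt_pow_mul {Cd : ℝ} (hA : 4 ≤ A) (hCd : 1 + 2 * √A ≤ Cd) (hp₀ : 0 ≤ p₀)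
    {m : ℕ} (ht : ∀ i, 1 ≤ i → i ≤ m → 0 ≤ t i)
    (hnd : ∀ j, 1 ≤ j → j ≤ m → Cd * t j ≤ coeff A p₀ t j) :
    ∀ j ≤ m, coeff A p₀ t j ≤ (√A)⁻¹ ^ j * p₀ := by
  intro j hj
  induction j with
  | zero => simp
  | succ j ih =>
    have hcoeff : 0 ≤ coeff A p₀ t j :=
      coeff_nonneg (by linarith) hp₀ fun i h1 h2 => ht i h1 (by omega)
    have hstep := hnd (j + 1) (by omega) hj
    rw [coeff_succ (by positivity)] at hstep ⊢
    calc A⁻¹ * coeff A p₀ t j + t (j + 1)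
        ≤ (√A)⁻¹ * coeff A p₀ t j :=
          inv_mul_add_le_inv_sqrt_mul hA hCd hcoeff (ht _ (by omega) hj) hstep
      _ ≤ (√A)⁻¹ * ((√A)⁻¹ ^ j * p₀) := by gcongr; exact ih (by omega)
      _ = (√A)⁻¹ ^ (j + 1) * p₀ := by ring

end ChainPoisson

/-- **Geometric decay along chains of non-𝒫-doubling cubes** (quantitative core of
Lemma 3.4 of Dąbrowski–Tolsa).  `t j` plays the role of the density
`μ(2B_{Q_j})/ℓ(Q_j)ⁿ` of the `j`-th cube in a chain, and
`p j = ∑_{i=1}^{j} A^{i−j} t i + A^{−j} p₀` plays the role of the Poisson-type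
coefficient `𝒫(Q_j)`.  If `C_d · t j ≤ p j` for `1 ≤ j ≤ m` (the intermediate cubes are
not 𝒫-doubling), then `t m ≤ A^{-m/2} p₀` and `p m ≤ 2 A^{-m/2} p₀`. -/
theorem statement_11 (A Cd : ℝ) (hA : 4 ≤ A) (hCd : 1 + 2 * Real.sqrt A ≤ Cd)
    (m : ℕ) (hm : 1 ≤ m) (p₀ : ℝ) (hp₀ : 0 ≤ p₀)
    (t : ℕ → ℝ) (ht : ∀ i, 1 ≤ i → i ≤ m → 0 ≤ t i)
    (hnd : ∀ j, 1 ≤ j → j ≤ m →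
      Cd * t j ≤ (∑ i ∈ Finset.Icc 1 j, A ^ ((i : ℤ) - (j : ℤ)) * t i) + A ^ (-(j : ℤ)) * p₀) :
    t m ≤ A ^ (-(m : ℝ) / 2) * p₀ ∧
      (∑ i ∈ Finset.Icc 1 m, A ^ ((i : ℤ) - (m : ℤ)) * t i) + A ^ (-(m : ℤ)) * p₀ ≤
        2 * (A ^ (-(m : ℝ) / 2) * p₀) := by
  have hdecay : ChainPoisson.coeff A p₀ t m ≤ A ^ (-(m : ℝ) / 2) * p₀ := by
    rw [← inv_sqrt_pow_eq_rpow (by linarith)]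
    exact ChainPoisson.coeff_le_inv_sqrt_pow_mul hA hCd hp₀ ht hnd m le_rfl
  have htm : t m ≤ ChainPoisson.coeff A p₀ t m :=
    (le_mul_of_one_le_left (ht m hm le_rfl) (by linarith [Real.sqrt_nonneg A])).trans
      (hnd m hm le_rfl)
  have hbound : 0 ≤ A ^ (-(m : ℝ) / 2) * p₀ := by positivity
  exact ⟨htm.trans hdecay, hdecay.trans (by linarith)⟩
end

section
/- There is an absolute constant C₁ with the following property. Let N, N₀ ≥ 1 be integers, C ≥ 1, and Λ > 1 with C ≤ Λ^{1/(12N)}. Set δ₀ = Λ^{−N₀−1/(2N)}. Then there is a positive integer N₁ ≤ C₁ N₀ N such that: for every θ > 0 and every finite sequence θ₁, …, θ_{N₁} of positive reals satisfying, for each 1 ≤ k < N₁, either θ_{k+1} = Λ θ_k or θ_{k+1} ≤ C δ₀ θ_k, there exists some k with 1 ≤ k ≤ N₁ such that θ_k ∉ ( θ Λ^{−N₀−3/(4N)}, θ Λ^{1−3/(4N)} ). -/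
/-!
Measure the density in base `Λ` relative to `θ`: the interval becomes `(lo, lo + N₀ + 1)` with
`lo = -N₀ - 3 / (4 N)`, and each step is `+1` or a drop by at least `N₀ + ε`, where
`ε = 5 / (12 N)`. Inside the interval a run of up-steps has length at most `N₀`, so the value
right after a drop is at least `ε` below the value right after the previous drop, and all these
values lie in `(lo, lo + 1 - ε]`. Hence there are fewer than `1 / ε` drops, and fewer than
`(N₀ + 1) (1 / ε + 1)` steps in total.
-/

open Set Real

-- `d` counts the drops so far and `r` the up-steps since the last one.
theorem exists_drops_run_of_up_or_down {b : ℕ → ℝ} {lo ε : ℝ} {m n : ℕ}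
    (hstep : ∀ k < n, b (k + 1) = b k + 1 ∨ b (k + 1) ≤ b k - (m + ε))
    (hb : ∀ k ≤ n, b k ∈ Ioo lo (lo + m + 1)) :
    ∀ k ≤ n, ∃ d r : ℕ, k ≤ (m + 1) * d + r ∧ lo + r < b k ∧
      (0 < d → b k ≤ lo + 1 + r - ε * d) := by
  intro k
  induction k with
  | zero => exact fun h0 => ⟨0, 0, le_rfl, by simpa using (hb 0 h0).1, by simp⟩
  | succ k ih =>
    intro hk
    obtain ⟨d, r, hkdr, hlow, hhigh⟩ := ih (by omega)
    obtain ⟨hlo, hhi⟩ := hb k (by omega)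
    rcases hstep k (by omega) with hup | hdown
    · refine ⟨d, r + 1, by omega, ?_, fun hd => ?_⟩
      · push_cast; linarith
      · have := hhigh hd; push_cast; linarith
    · have hrm : r ≤ m := by
        have : (r : ℝ) < m + 1 := by linarith
        exact Nat.lt_succ_iff.mp (by exact_mod_cast this)
      refine ⟨d + 1, 0, by nlinarith, by simpa using (hb (k + 1) hk).1, fun _ => ?_⟩
      push_cast
      rcases Nat.eq_zero_or_pos d with hd | hd
      · subst hd; push_cast at hhi ⊢; linarith
      · have := hhigh hd
        have : (r : ℝ) ≤ m := by exact_mod_cast hrm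
        linarith

theorem length_lt_of_up_or_down {b : ℕ → ℝ} {lo ε : ℝ} {m n : ℕ} (hε : 0 < ε)
    (hstep : ∀ k < n, b (k + 1) = b k + 1 ∨ b (k + 1) ≤ b k - (m + ε))
    (hb : ∀ k ≤ n, b k ∈ Ioo lo (lo + m + 1)) :
    (n : ℝ) < (m + 1) * (ε⁻¹ + 1) := by
  obtain ⟨d, r, hndr, hlow, hhigh⟩ := exists_drops_run_of_up_or_down hstep hb n le_rfl
  have hrm : (r : ℝ) ≤ m := by
    have : (r : ℝ) < m + 1 := by linarith [(hb n le_rfl).2]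
    exact_mod_cast Nat.lt_succ_iff.mp (by exact_mod_cast this)
  have hd : (d : ℝ) < ε⁻¹ := by
    rw [← one_div, lt_div_iff₀ hε]
    rcases Nat.eq_zero_or_pos d with rfl | hd
    · simp
    · linarith [hhigh hd]
  have : (n : ℝ) ≤ (m + 1) * d + r := by exact_mod_cast hndr
  nlinarith

theorem logb_sub_logb_mem_Ioo {Λ θ x p q : ℝ} (hΛ : 1 < Λ) (hθ : 0 < θ)
    (hx : x ∈ Ioo (θ * Λ ^ p) (θ * Λ ^ q)) : logb Λ x - logb Λ θ ∈ Ioo p q := by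
  have hΛ0 : 0 < Λ := by linarith
  have logb_mul_rpow (s : ℝ) : logb Λ (θ * Λ ^ s) = logb Λ θ + s := by
    rw [logb_mul hθ.ne' (rpow_pos_of_pos hΛ0 s).ne', logb_rpow hΛ0 hΛ.ne']
  obtain ⟨hp, hq⟩ := hx
  constructor
  · have := logb_lt_logb hΛ (by positivity) hp
    rw [logb_mul_rpow] at this; linarith
  · have := logb_lt_logb hΛ (hp.trans' (by positivity)) hq
    rw [logb_mul_rpow] at this; linarith

theorem logb_up_or_down {Λ C s t x y : ℝ} (hΛ : 1 < Λ) (hx : 0 < x) (hy : 0 < y)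
    (hC : C ≤ Λ ^ t) (h : y = Λ * x ∨ y ≤ C * Λ ^ s * x) :
    logb Λ y = logb Λ x + 1 ∨ logb Λ y ≤ logb Λ x + (t + s) := by
  have hΛ0 : 0 < Λ := by linarith
  refine h.imp (fun hup => ?_) (fun hdown => ?_)
  · rw [hup, logb_mul hΛ0.ne' hx.ne', logb_self_eq_one hΛ, add_comm]
  · have hle : y ≤ Λ ^ (t + s) * x := by
      rw [rpow_add hΛ0]
      refine hdown.trans (mul_le_mul_of_nonneg_right ?_ hx.le)
      exact mul_le_mul_of_nonneg_right hC (by positivity)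
    calc logb Λ y ≤ logb Λ (Λ ^ (t + s) * x) := logb_le_logb_of_le hΛ hy hle
      _ = logb Λ x + (t + s) := by
        rw [logb_mul (rpow_pos_of_pos hΛ0 _).ne' hx.ne', logb_rpow hΛ0 hΛ.ne', add_comm]

/-- **Density leaves the interval `I_θ` in boundedly many steps** (quantitative core of
Lemma 5.4 of Dąbrowski–Tolsa).  `a k` plays the role of the density `Θ(R_k)` of the `k`-th
cube in a chain of `Top` cubes with `R_{k+1} ∈ End(R_k)`: at each step the density either
jumps up exactly by the factor `Λ` or drops by at least the factor `C δ₀`, where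
`δ₀ = Λ^{-N₀-1/(2N)}`.  Then within at most `N₁ ≤ C₁ N₀ N` steps the density must leave
the interval `(θ Λ^{-N₀-3/(4N)}, θ Λ^{1-3/(4N)})`. -/
theorem statement_12 :
    ∃ C₁ : ℝ, 0 < C₁ ∧
      ∀ (N N₀ : ℕ), 1 ≤ N → 1 ≤ N₀ →
      ∀ (C Λ : ℝ), 1 ≤ C → 1 < Λ → C ≤ Λ ^ (1 / (12 * (N : ℝ))) →
      ∃ N₁ : ℕ, 1 ≤ N₁ ∧ (N₁ : ℝ) ≤ C₁ * N₀ * N ∧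
        ∀ θ : ℝ, 0 < θ → ∀ a : ℕ → ℝ,
          (∀ k, 1 ≤ k → k ≤ N₁ → 0 < a k) →
          (∀ k, 1 ≤ k → k < N₁ →
            a (k + 1) = Λ * a k ∨
              a (k + 1) ≤ C * Λ ^ (-(N₀ : ℝ) - 1 / (2 * (N : ℝ))) * a k) →
          ∃ k, 1 ≤ k ∧ k ≤ N₁ ∧
            a k ∉ Set.Ioo (θ * Λ ^ (-(N₀ : ℝ) - 3 / (4 * (N : ℝ))))
              (θ * Λ ^ (1 - 3 / (4 * (N : ℝ)))) := by
  refine ⟨9, by norm_num, fun N N₀ hN hN₀ C Λ hC hΛ hCΛ => ?_⟩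
  have hN' : (1 : ℝ) ≤ N := by exact_mod_cast hN
  have hN₀' : (1 : ℝ) ≤ N₀ := by exact_mod_cast hN₀
  refine ⟨(N₀ + 1) * (3 * N + 1) + 1, by omega, ?_, fun θ hθ a ha hstep => ?_⟩
  · push_cast
    nlinarith
  by_contra! hout
  have hε : 0 < 5 / (12 * (N : ℝ)) := by positivity
  have hdrop : 1 / (12 * (N : ℝ)) + (-(N₀ : ℝ) - 1 / (2 * N)) = -(N₀ + 5 / (12 * N)) := by
    field_simp; ring
  have hlen := length_lt_of_up_or_down (b := fun k => logb Λ (a (k + 1)) - logb Λ θ)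
    (lo := -(N₀ : ℝ) - 3 / (4 * N)) (m := N₀) (n := (N₀ + 1) * (3 * N + 1)) hε ?_ ?_
  · rw [inv_div] at hlen
    push_cast at hlen
    nlinarith
  · intro k hk
    have hlogb := logb_up_or_down hΛ (ha (k + 1) (by omega) (by omega))
      (ha (k + 2) (by omega) (by omega)) hCΛ (hstep (k + 1) (by omega) (by omega))
    rw [hdrop] at hlogb
    rcases hlogb with hup | hdown
    · left; linarith
    · right; linarith
  · intro k hk
    convert logb_sub_logb_mem_Ioo hΛ hθ (hout (k + 1) (by omega) (by omega)) using 2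
    ring
end

section
/- Let n ≥ 1 be an integer and let Γ ⊂ ℝ^{n+1} be a closed set such that ν = H^n|_Γ (the restriction of n-dimensional Hausdorff measure to Γ) satisfies c₁ r^n ≤ ν(B(x,r)) ≤ c₂ r^n for all x ∈ Γ and 0 < r < diam Γ. Let C_* ≥ 2, Θ > 0, let μ be a Radon measure on ℝ^{n+1}, and let {P_i}_{i∈I} be a countable family of pairwise disjoint Borel sets with P_i ⊂ B_i := B(x_i, r_i) such that, for every i ∈ I: (a) (C_*/2) B_i ∩ Γ ≠ ∅; (b) (C_*/2) r_i ≤ diam Γ; and (c) μ(3 C_* B_i) ≤ Θ r_i^n. Then there exist Borel functions g_i : Γ → [0,∞), i ∈ I, such that each g_i is supported in Γ ∩ closure(C_* B_i), ∫_Γ g_i dν = μ(P_i) for every i, and Σ_{i∈I} g_i ≤ C Θ ν-a.e. on Γ, where C depends only on n, c₁, c₂ and C_*. -/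
open MeasureTheory Metric Set ENNReal

noncomputable section

/-!
First spread each mass `μ(P_i)` with constant density `2μ(P_i)/ν(S_i)` over the piece
`S_i = B(y_i, C_* r_i/4) ∩ Γ` of `Γ` near `B_i`, where AD-regularity gives `ν(S_i) ≳ r_iⁿ`.
For fixed `m`, the pieces `S_k` with `r_k ≤ r_m` meeting `S_m` come from disjoint sets
`P_k ⊆ 3C_* B_m`, so by the packing bound the sum `Φ_m` of their densities has mean `O(Θ)` on
`S_m`, and by Chebyshev `Φ_m < L = CΘ` on a part `E_m` carrying half of `ν(S_m)`. The final
density `μ(P_m)/ν(E_m)` on `E_m` is then below the first one. Given finitely many indices `k`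
with `g_k(z) ≠ 0`, take `m` among them with `r_m` maximal: then `z ∈ E_m`, and each of these
`g_k(z)` is bounded by a term of `Φ_m(z) < L`.
-/

theorem ENNReal.tsum_le_of_forall_ne_zero {ι α : Type*} [LinearOrder α] (ρ : ι → α)
    {a : ι → ℝ≥0∞} {L : ℝ≥0∞}
    (h : ∀ m, a m ≠ 0 → ∑' k : {k | ρ k ≤ ρ m}, a k ≤ L) :
    ∑' i, a i ≤ L := by
  classical
  rw [ENNReal.tsum_eq_iSup_sum]
  refine iSup_le fun A => ?_
  rw [← Finset.sum_filter_ne_zero]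
  rcases (A.filter (a · ≠ 0)).eq_empty_or_nonempty with hA | hA
  · simp [hA]
  obtain ⟨m, hmA, hmax⟩ := Finset.exists_max_image _ ρ hA
  calc ∑ k ∈ A with a k ≠ 0, a k
      = ∑ k ∈ A with a k ≠ 0, {k | ρ k ≤ ρ m}.indicator a k :=
        Finset.sum_congr rfl fun k hk =>
          (indicator_of_mem (s := {k | ρ k ≤ ρ m}) (hmax k hk) a).symm
    _ ≤ ∑' k, {k | ρ k ≤ ρ m}.indicator a k := ENNReal.sum_le_tsum _
    _ ≤ L := (tsum_subtype _ a).symm.trans_le (h m (Finset.mem_filter.mp hmA).2)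

section Spreading

variable {X : Type*} [MeasurableSpace X] (ν : Measure X)

def spreadDensity (S : Set X) (c : ℝ≥0∞) : X → ℝ≥0∞ := S.indicator fun _ => c / ν S

variable {ν}

theorem measurable_spreadDensity {S : Set X} (hS : MeasurableSet S) (c : ℝ≥0∞) :
    Measurable (spreadDensity ν S c) :=
  measurable_const.indicator hS

theorem lintegral_spreadDensity {S : Set X} (hS : MeasurableSet S) (h0 : ν S ≠ 0)
    (htop : ν S ≠ ∞) (c : ℝ≥0∞) : ∫⁻ z, spreadDensity ν S c z ∂ν = c := by
  rw [spreadDensity, lintegral_indicator_const hS, ENNReal.div_mul_cancel h0 htop]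

theorem setLIntegral_spreadDensity_le {S : Set X} (hS : MeasurableSet S) (T : Set X)
    (c : ℝ≥0∞) : ∫⁻ z in T, spreadDensity ν S c z ∂ν ≤ c := by
  rw [spreadDensity, lintegral_indicator_const hS, Measure.restrict_apply hS]
  calc c / ν S * ν (S ∩ T)
      ≤ c / ν S * ν S := mul_le_mul_right (measure_mono inter_subset_left) _
    _ = ν S * (c / ν S) := mul_comm _ _
    _ ≤ c := ENNReal.mul_div_le

theorem setLIntegral_spreadDensity_of_disjoint {S T : Set X} (hS : MeasurableSet S)
    (hST : Disjoint S T) (c : ℝ≥0∞) : ∫⁻ z in T, spreadDensity ν S c z ∂ν = 0 := by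
  rw [spreadDensity, lintegral_indicator_const hS, Measure.restrict_apply hS, hST.inter_eq,
    measure_empty, mul_zero]

theorem spreadDensity_le_spreadDensity {S E : Set X} (hES : E ⊆ S) (h : ν S ≤ 2 * ν E)
    (c : ℝ≥0∞) (z : X) : spreadDensity ν E c z ≤ spreadDensity ν S (2 * c) z := by
  by_cases hz : z ∈ E
  · rw [spreadDensity, spreadDensity, indicator_of_mem hz, indicator_of_mem (hES hz),
      ← ENNReal.mul_div_mul_left c (ν E) two_ne_zero ofNat_ne_top]
    exact ENNReal.div_le_div_left h _
  · rw [spreadDensity, indicator_of_notMem hz]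
    exact zero_le

theorem measure_le_two_mul_measure_inter_lt {S : Set X} {Φ : X → ℝ≥0∞} {L : ℝ≥0∞}
    (hΦ : Measurable Φ) (hL0 : L ≠ 0) (hL : L ≠ ∞) (hS : ν S ≠ ∞)
    (h : 2 * ∫⁻ z in S, Φ z ∂ν ≤ L * ν S) : ν S ≤ 2 * ν (S ∩ {z | Φ z < L}) := by
  set bad := ν ({z | L ≤ Φ z} ∩ S)
  have hbad : 2 * bad ≤ ν S := by
    have hcheb : L * bad ≤ ∫⁻ z in S, Φ z ∂ν :=
      (mul_le_mul_right (Measure.le_restrict_apply _ _) L).trans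
        (mul_meas_ge_le_lintegral₀ hΦ.aemeasurable L)
    rw [← ENNReal.mul_le_mul_iff_right hL0 hL]
    calc L * (2 * bad) = 2 * (L * bad) := by ring
      _ ≤ L * ν S := (mul_le_mul_right hcheb 2).trans h
  have hcover : ν S ≤ ν (S ∩ {z | Φ z < L}) + bad := by
    refine (measure_mono fun z hz => ?_).trans (measure_union_le _ _)
    rcases lt_or_ge (Φ z) L with hlt | hge
    · exact Or.inl ⟨hz, hlt⟩
    · exact Or.inr ⟨hge, hz⟩
  refine ENNReal.le_of_add_le_add_right hS ?_
  calc ν S + ν S ≤ 2 * ν (S ∩ {z | Φ z < L}) + 2 * bad := by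
        rw [← two_mul, ← mul_add]; exact mul_le_mul_right hcover 2
    _ ≤ 2 * ν (S ∩ {z | Φ z < L}) + ν S := add_le_add_right hbad _

variable {ι α : Type*} [Countable ι] [LinearOrder α]

theorem setLIntegral_tsum_spreadDensity_le {S : ι → Set X} (hS : ∀ i, MeasurableSet (S i))
    (ρ : ι → α) (c : ι → ℝ≥0∞) (m : ι) :
    ∫⁻ z in S m, ∑' k : {k | ρ k ≤ ρ m}, spreadDensity ν (S k) (c k) z ∂ν ≤
      ∑' k : {k | ρ k ≤ ρ m ∧ (S k ∩ S m).Nonempty}, c k := by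
  rw [lintegral_tsum fun k : {k | ρ k ≤ ρ m} =>
      (measurable_spreadDensity (hS k) _).aemeasurable,
    tsum_subtype {k | ρ k ≤ ρ m} fun k => ∫⁻ z in S m, spreadDensity ν (S k) (c k) z ∂ν,
    tsum_subtype]
  refine ENNReal.tsum_le_tsum fun k => ?_
  by_cases hk : k ∈ {k | ρ k ≤ ρ m}
  · rw [indicator_of_mem hk]
    by_cases hkm : (S k ∩ S m).Nonempty
    · rw [indicator_of_mem (show k ∈ {k | ρ k ≤ ρ m ∧ (S k ∩ S m).Nonempty} from ⟨hk, hkm⟩)]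
      exact setLIntegral_spreadDensity_le (hS k) _ _
    · rw [setLIntegral_spreadDensity_of_disjoint (hS k)
        (disjoint_iff_inter_eq_empty.mpr (not_nonempty_iff_eq_empty.mp hkm))]
      exact zero_le
  · rw [indicator_of_notMem hk]
    exact zero_le

theorem exists_spreading_of_packing {S : ι → Set X} (hS : ∀ i, MeasurableSet (S i))
    (hS0 : ∀ i, ν (S i) ≠ 0) (hStop : ∀ i, ν (S i) ≠ ∞) (ρ : ι → α) (t : ι → ℝ≥0∞)
    {L : ℝ≥0∞} (hL0 : L ≠ 0) (hL : L ≠ ∞)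
    (hpack : ∀ m, 4 * ∑' k : {k | ρ k ≤ ρ m ∧ (S k ∩ S m).Nonempty}, t k ≤ L * ν (S m)) :
    ∃ G : ι → X → ℝ≥0∞, (∀ i, Measurable (G i)) ∧ (∀ i z, G i z ≠ 0 → z ∈ S i) ∧
      (∀ i, ∫⁻ z, G i z ∂ν = t i) ∧ ∀ z, ∑' i, G i z ≤ L := by
  set Φ : ι → X → ℝ≥0∞ :=
    fun m z => ∑' k : {k | ρ k ≤ ρ m}, spreadDensity ν (S k) (2 * t k) z
  have hΦ : ∀ m, Measurable (Φ m) := fun m =>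
    Measurable.tsum fun k => measurable_spreadDensity (hS k) _
  set E : ι → Set X := fun m => S m ∩ {z | Φ m z < L}
  have hE : ∀ m, MeasurableSet (E m) := fun m =>
    (hS m).inter (measurableSet_lt (hΦ m) measurable_const)
  have hSE : ∀ m, ν (S m) ≤ 2 * ν (E m) := by
    refine fun m => measure_le_two_mul_measure_inter_lt (hΦ m) hL0 hL (hStop m) ?_
    calc 2 * ∫⁻ z in S m, Φ m z ∂ν
        ≤ 2 * ∑' k : {k | ρ k ≤ ρ m ∧ (S k ∩ S m).Nonempty}, 2 * t k :=
          mul_le_mul_right (setLIntegral_tsum_spreadDensity_le hS ρ (fun k => 2 * t k) m) 2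
      _ = 4 * ∑' k : {k | ρ k ≤ ρ m ∧ (S k ∩ S m).Nonempty}, t k := by
          rw [ENNReal.tsum_mul_left, ← mul_assoc]; norm_num
      _ ≤ L * ν (S m) := hpack m
  have hE0 : ∀ m, ν (E m) ≠ 0 := fun m h => hS0 m (by simpa [h] using hSE m)
  have hEtop : ∀ m, ν (E m) ≠ ∞ := fun m =>
    ne_top_of_le_ne_top (hStop m) (measure_mono inter_subset_left)
  refine ⟨fun i => spreadDensity ν (E i) (t i), fun i => measurable_spreadDensity (hE i) _,
    fun i z hz => (mem_of_indicator_ne_zero hz).1,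
    fun i => lintegral_spreadDensity (hE i) (hE0 i) (hEtop i) _, fun z => ?_⟩
  refine ENNReal.tsum_le_of_forall_ne_zero ρ fun m hm => ?_
  calc ∑' k : {k | ρ k ≤ ρ m}, spreadDensity ν (E k) (t k) z
      ≤ Φ m z := ENNReal.tsum_le_tsum fun k =>
        spreadDensity_le_spreadDensity inter_subset_left (hSE k) _ _
    _ ≤ L := (mem_of_indicator_ne_zero hm).2.le

end Spreading

section Packing

variable {X ι : Type*} [PseudoMetricSpace X] {Cs : ℝ}

theorem ball_subset_ball_of_inter_nonempty (hCs : 2 ≤ Cs) {x₁ x₂ y₁ y₂ : X} {r₁ r₂ : ℝ}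
    (hr : r₁ ≤ r₂) (hy₁ : dist y₁ x₁ < Cs / 2 * r₁) (hy₂ : dist y₂ x₂ < Cs / 2 * r₂)
    (hne : (ball y₁ (Cs / 4 * r₁) ∩ ball y₂ (Cs / 4 * r₂)).Nonempty) :
    ball x₁ r₁ ⊆ ball x₂ (3 * Cs * r₂) := by
  obtain ⟨w, hw₁, hw₂⟩ := hne
  refine ball_subset_ball' ?_
  rw [mem_ball] at hw₁ hw₂
  have hr₂ : 0 < r₂ := by nlinarith [dist_nonneg (x := y₂) (y := x₂)]
  have hx := dist_triangle4 x₁ y₁ w x₂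
  have hw := dist_triangle w y₂ x₂
  rw [dist_comm x₁ y₁, dist_comm y₁ w] at hx
  nlinarith [mul_le_mul_of_nonneg_left hr (by linarith : (0 : ℝ) ≤ Cs)]

theorem tsum_measure_le_measure_ball [MeasurableSpace X] [Countable ι] (μ : Measure X)
    (hCs : 2 ≤ Cs) {x y : ι → X} {r : ι → ℝ} {P S : ι → Set X} (hPm : ∀ i, MeasurableSet (P i))
    (hPd : Pairwise fun i j => Disjoint (P i) (P j)) (hPB : ∀ i, P i ⊆ ball (x i) (r i))
    (hy : ∀ i, dist (y i) (x i) < Cs / 2 * r i) (hS : ∀ i, S i ⊆ ball (y i) (Cs / 4 * r i))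
    (m : ι) :
    ∑' k : {k | r k ≤ r m ∧ (S k ∩ S m).Nonempty}, μ (P k) ≤ μ (ball (x m) (3 * Cs * r m)) := by
  rw [← measure_iUnion (fun k l hkl => hPd (Subtype.coe_ne_coe.mpr hkl)) fun k => hPm k]
  refine measure_mono (iUnion_subset fun ⟨k, hkr, hkS⟩ => (hPB k).trans ?_)
  exact ball_subset_ball_of_inter_nonempty hCs hkr (hy k) (hy m)
    (hkS.mono (inter_subset_inter (hS k) (hS m)))

theorem exists_spreading_near_balls [MeasurableSpace X] [Countable ι] (μ ν : Measure X)
    {n : ℕ} {c₁ Θ : ℝ} (hc₁ : 0 < c₁) (hCs : 2 ≤ Cs) (hΘ : 0 < Θ) {x y : ι → X} {r : ι → ℝ}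
    {P S : ι → Set X} (hr : ∀ i, 0 < r i) (hPm : ∀ i, MeasurableSet (P i))
    (hPd : Pairwise fun i j => Disjoint (P i) (P j)) (hPB : ∀ i, P i ⊆ ball (x i) (r i))
    (hy : ∀ i, dist (y i) (x i) < Cs / 2 * r i) (hSm : ∀ i, MeasurableSet (S i))
    (hS : ∀ i, S i ⊆ ball (y i) (Cs / 4 * r i))
    (hνS : ∀ i, ENNReal.ofReal (c₁ * (Cs / 4 * r i) ^ n) ≤ ν (S i)) (hνStop : ∀ i, ν (S i) ≠ ∞)
    (hpack : ∀ i, μ (ball (x i) (3 * Cs * r i)) ≤ ENNReal.ofReal (Θ * r i ^ n)) :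
    ∃ G : ι → X → ℝ≥0∞, (∀ i, Measurable (G i)) ∧ (∀ i z, G i z ≠ 0 → z ∈ S i) ∧
      (∀ i, ∫⁻ z, G i z ∂ν = μ (P i)) ∧
      ∀ z, ∑' i, G i z ≤ ENNReal.ofReal (4 / (c₁ * (Cs / 4) ^ n) * Θ) := by
  have hCs0 : 0 < Cs := by linarith
  refine exists_spreading_of_packing hSm
    (fun i => ((ofReal_pos.2 (by have := hr i; positivity)).trans_le (hνS i)).ne') hνStop r _
    (ofReal_pos.2 (by positivity)).ne' ofReal_ne_top fun m => ?_
  calc 4 * ∑' k : {k | r k ≤ r m ∧ (S k ∩ S m).Nonempty}, μ (P k)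
      ≤ 4 * ENNReal.ofReal (Θ * r m ^ n) := mul_le_mul_right
        ((tsum_measure_le_measure_ball μ hCs hPm hPd hPB hy hS m).trans (hpack m)) 4
    _ = ENNReal.ofReal (4 / (c₁ * (Cs / 4) ^ n) * Θ) *
          ENNReal.ofReal (c₁ * (Cs / 4 * r m) ^ n) := by
        rw [← ENNReal.ofReal_mul (by positivity), ← ENNReal.ofReal_ofNat,
          ← ENNReal.ofReal_mul (by norm_num)]
        congr 1
        rw [mul_pow]
        field_simp
    _ ≤ _ := mul_le_mul_right (hνS m) _

end Packing

theorem statement_14_general (n : ℕ) (c₁ c₂ Cs : ℝ)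
    (hc₁ : 0 < c₁) (hCs : 2 ≤ Cs) :
    ∃ C : ℝ, 0 < C ∧
      ∀ Γ : Set (EuclideanSpace ℝ (Fin (n + 1))), IsClosed Γ →
      (∀ x ∈ Γ, ∀ r : ℝ, 0 < r → ENNReal.ofReal r < EMetric.diam Γ →
          ENNReal.ofReal (c₁ * r ^ n) ≤ (μH[(n : ℝ)]).restrict Γ (ball x r) ∧
          (μH[(n : ℝ)]).restrict Γ (ball x r) ≤ ENNReal.ofReal (c₂ * r ^ n)) →
      ∀ Θ : ℝ, 0 < Θ →
      ∀ (μ : Measure (EuclideanSpace ℝ (Fin (n + 1)))), IsLocallyFiniteMeasure μ →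
      ∀ (I : Type), Countable I →
      ∀ (x : I → EuclideanSpace ℝ (Fin (n + 1))) (r : I → ℝ)
        (P : I → Set (EuclideanSpace ℝ (Fin (n + 1)))),
      (∀ i, 0 < r i) →
      (∀ i, MeasurableSet (P i)) →
      (Pairwise fun i j => Disjoint (P i) (P j)) →
      (∀ i, P i ⊆ ball (x i) (r i)) →
      (∀ i, (ball (x i) (Cs / 2 * r i) ∩ Γ).Nonempty) →
      (∀ i, ENNReal.ofReal (Cs / 2 * r i) ≤ EMetric.diam Γ) →
      (∀ i, μ (ball (x i) (3 * Cs * r i)) ≤ ENNReal.ofReal (Θ * r i ^ n)) →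
      ∃ g : I → EuclideanSpace ℝ (Fin (n + 1)) → ℝ,
        (∀ i, Measurable (g i)) ∧
        (∀ i y, 0 ≤ g i y) ∧
        (∀ i y, g i y ≠ 0 → y ∈ Γ ∩ closure (ball (x i) (Cs * r i))) ∧
        (∀ i, (∫⁻ y, ENNReal.ofReal (g i y) ∂((μH[(n : ℝ)]).restrict Γ)) = μ (P i)) ∧
        (∀ᵐ y ∂((μH[(n : ℝ)]).restrict Γ),
          (∑' i : I, ENNReal.ofReal (g i y)) ≤ ENNReal.ofReal (C * Θ)) := by
  refine ⟨4 / (c₁ * (Cs / 4) ^ n), by positivity, ?_⟩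
  intro Γ hΓ hreg Θ hΘ μ _ I _ x r P hr hPm hPd hPB hne hdiam hpack
  choose y hyx hyΓ using hne
  set S := fun i => ball (y i) (Cs / 4 * r i) ∩ Γ
  have hSm : ∀ i, MeasurableSet (S i) := fun i => measurableSet_ball.inter hΓ.measurableSet
  have hνS : ∀ i, ENNReal.ofReal (c₁ * (Cs / 4 * r i) ^ n) ≤ (μH[(n : ℝ)]).restrict Γ (S i) ∧
      (μH[(n : ℝ)]).restrict Γ (S i) ≤ ENNReal.ofReal (c₂ * (Cs / 4 * r i) ^ n) := by
    intro i
    have hri := hr i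
    have hrad : ENNReal.ofReal (Cs / 4 * r i) < ediam Γ :=
      ((ofReal_lt_ofReal_iff (by positivity)).2 (by nlinarith)).trans_le (hdiam i)
    rw [Measure.restrict_apply (hSm i), inter_assoc, inter_self,
      ← Measure.restrict_apply measurableSet_ball]
    exact hreg (y i) (hyΓ i) _ (by positivity) hrad
  obtain ⟨G, hGm, hGS, hGint, hGsum⟩ := exists_spreading_near_balls μ _ hc₁ hCs hΘ hr hPm hPd
    hPB hyx hSm (fun i => inter_subset_left) (fun i => (hνS i).1)
    (fun i => ne_top_of_le_ne_top ofReal_ne_top (hνS i).2) hpack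
  have hGtop : ∀ i y, G i y ≠ ∞ := fun i y =>
    ne_top_of_le_ne_top ofReal_ne_top ((ENNReal.le_tsum i).trans (hGsum y))
  refine ⟨fun i y => (G i y).toReal, fun i => (hGm i).ennreal_toReal,
    fun i y => toReal_nonneg, fun i z hz => ?_, fun i => ?_, ae_of_all _ fun z => ?_⟩
  · obtain ⟨hzy, hzΓ⟩ := hGS i z (toReal_ne_zero.1 hz).1
    refine ⟨hzΓ, subset_closure (ball_subset_ball' ?_ hzy)⟩
    nlinarith [mem_ball.1 (hyx i), hr i]
  · simp_rw [ofReal_toReal (hGtop i _), hGint]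
  · simp_rw [ofReal_toReal (hGtop _ z), hGsum]

/-- **Lemma 9.9 of Dąbrowski–Tolsa (abstract form):** given an `n`-AD-regular closed set
`Γ ⊂ ℝ^{n+1}` (with respect to `ν = H^n|_Γ`), the mass `μ(P_i)` of each member of a
pairwise disjoint family of Borel sets `P_i ⊆ B_i = B(x_i,r_i)` lying near `Γ` and
satisfying the packing bound `μ(3C_* B_i) ≤ Θ r_iⁿ` can be spread onto `Γ` as densities
`g_i` supported on `Γ ∩ closure(C_* B_i)`, with the correct total masses and with
`∑_i g_i ≤ C Θ` ν-a.e. -/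
theorem statement_14 (n : ℕ) (hn : 1 ≤ n) (c₁ c₂ Cs : ℝ)
    (hc₁ : 0 < c₁) (hc₁₂ : c₁ ≤ c₂) (hCs : 2 ≤ Cs) :
    ∃ C : ℝ, 0 < C ∧
      ∀ Γ : Set (EuclideanSpace ℝ (Fin (n + 1))), IsClosed Γ →
      (∀ x ∈ Γ, ∀ r : ℝ, 0 < r → ENNReal.ofReal r < EMetric.diam Γ →
          ENNReal.ofReal (c₁ * r ^ n) ≤ (μH[(n : ℝ)]).restrict Γ (ball x r) ∧
          (μH[(n : ℝ)]).restrict Γ (ball x r) ≤ ENNReal.ofReal (c₂ * r ^ n)) →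
      ∀ Θ : ℝ, 0 < Θ →
      ∀ (μ : Measure (EuclideanSpace ℝ (Fin (n + 1)))), IsLocallyFiniteMeasure μ →
      ∀ (I : Type), Countable I →
      ∀ (x : I → EuclideanSpace ℝ (Fin (n + 1))) (r : I → ℝ)
        (P : I → Set (EuclideanSpace ℝ (Fin (n + 1)))),
      (∀ i, 0 < r i) →
      (∀ i, MeasurableSet (P i)) →
      (Pairwise fun i j => Disjoint (P i) (P j)) →
      (∀ i, P i ⊆ ball (x i) (r i)) →
      (∀ i, (ball (x i) (Cs / 2 * r i) ∩ Γ).Nonempty) →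
      (∀ i, ENNReal.ofReal (Cs / 2 * r i) ≤ EMetric.diam Γ) →
      (∀ i, μ (ball (x i) (3 * Cs * r i)) ≤ ENNReal.ofReal (Θ * r i ^ n)) →
      ∃ g : I → EuclideanSpace ℝ (Fin (n + 1)) → ℝ,
        (∀ i, Measurable (g i)) ∧
        (∀ i y, 0 ≤ g i y) ∧
        (∀ i y, g i y ≠ 0 → y ∈ Γ ∩ closure (ball (x i) (Cs * r i))) ∧
        (∀ i, (∫⁻ y, ENNReal.ofReal (g i y) ∂((μH[(n : ℝ)]).restrict Γ)) = μ (P i)) ∧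
        (∀ᵐ y ∂((μH[(n : ℝ)]).restrict Γ),
          (∑' i : I, ENNReal.ofReal (g i y)) ≤ ENNReal.ofReal (C * Θ)) :=
  statement_14_general n c₁ c₂ Cs hc₁ hCs

end
end
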